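/- arXiv:1009.1306 — 2 statements merged into one kernel-verified Lean document; each statement's English description precedes it below -/
import Mathlib

section
/- (Reduction to a half line.) The operator U′_J = I_κ ⊗ U_J satisfies: U′_J|Own,0,ε⟩ = a_κ|Own,1,Down⟩ + √(κ−1) b_κ|Other,1,Down⟩; U′_J|Other,0,ε⟩ = √(κ−1) b_κ|Own,1,Down⟩ − a_κ|Other,1,Down⟩; for m ∈ {Own,Other}: U′_J|m,1,Up⟩ = a|m,0,ε⟩ + c|m,2,Down⟩, U′_J|m,x,Up⟩ = a|m,x−1,Up⟩ + c|m,x+1,Down⟩ for x ≥ 2, U′_J|m,1,Down⟩ = b|m,0,ε⟩ + d|m,2,Down⟩, and U′_J|m,x,Down⟩ = b|m,x−1,Up⟩ + d|m,x+1,Down⟩ for x ≥ 2. In particular, the subspace spanned by {|Own,0,ε⟩, |Other,0,ε⟩} ∪ {|m,x,l⟩ : m ∈ {Own,Other}, x ≥ 1, l ∈ {Up,Down}} is invariant under U′_J. -/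
/-!
Reduction of the enlarged walk `W'_{t,κ}` to a walk on a half line:
the action of `U'_J = I_κ ⊗ U_J` on the enlarged basis
`{|Own,0,ε⟩, |Other,0,ε⟩} ∪ {|m,x,l⟩ : m ∈ {Own,Other}, x ≥ 1, l ∈ {Up,Down}}`,
and the invariance of the subspace it spans.
-/

noncomputable section

namespace QW

inductive Dir : Type
  | up : Dir
  | down : Dir
  deriving DecidableEq

/-- Basis of the Hilbert space of `J_κ`: `Sum.inl r` is `|0, ε_r⟩`,
`Sum.inr (r, n, l)` is `|h_r(n+1), l⟩`. -/
abbrev JB (κ : ℕ) := Fin κ ⊕ (Fin κ × ℕ × Dir)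

/-- Coin operator `F_J`: Grover coin `G_κ` at the origin, `C = [[a,b],[c,d]]`
(in the ordered basis `(Up, Down)`) at every other vertex. -/
def coinOp (κ : ℕ) (a b c d : ℂ) (α : JB κ → ℂ) : JB κ → ℂ
  | Sum.inl r => ∑ j : Fin κ, (if r = j then 2 / (κ : ℂ) - 1 else 2 / (κ : ℂ)) * α (Sum.inl j)
  | Sum.inr (r, n, Dir.up) => a * α (Sum.inr (r, n, Dir.up)) + b * α (Sum.inr (r, n, Dir.down))
  | Sum.inr (r, n, Dir.down) => c * α (Sum.inr (r, n, Dir.up)) + d * α (Sum.inr (r, n, Dir.down))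

/-- Shift operator `S_J` (acting on amplitude functions). -/
def shiftOp (κ : ℕ) (α : JB κ → ℂ) : JB κ → ℂ
  | Sum.inl r => α (Sum.inr (r, 0, Dir.up))
  | Sum.inr (r, n, Dir.up) => α (Sum.inr (r, n + 1, Dir.up))
  | Sum.inr (r, 0, Dir.down) => α (Sum.inl r)
  | Sum.inr (r, n + 1, Dir.down) => α (Sum.inr (r, n, Dir.down))

/-- One step evolution `U_J = S_J F_J`. -/
def evolve (κ : ℕ) (a b c d : ℂ) (α : JB κ → ℂ) : JB κ → ℂ :=
  shiftOp κ (coinOp κ a b c d α)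

/-- State at time `t` starting from `Σ_j ψ_j |0, ε_j⟩`. -/
def state (κ : ℕ) (a b c d : ℂ) (ψ : Fin κ → ℂ) (t : ℕ) : JB κ → ℂ :=
  (evolve κ a b c d)^[t] (fun e => match e with | Sum.inl j => ψ j | _ => 0)

/-- `P(X_{t,r} = x)`. -/
def prob (κ : ℕ) (a b c d : ℂ) (ψ : Fin κ → ℂ) (t : ℕ) (r : Fin κ) (x : ℕ) : ℝ :=
  match x with
  | 0 => ‖state κ a b c d ψ t (Sum.inl r)‖ ^ 2
  | n + 1 =>
      ‖state κ a b c d ψ t (Sum.inr (r, n, Dir.up))‖ ^ 2 +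
        ‖state κ a b c d ψ t (Sum.inr (r, n, Dir.down))‖ ^ 2

/-- The enlarged walk `U'_J = I_κ ⊗ U_J`. -/
def evolve' (κ : ℕ) (a b c d : ℂ) (α : Fin κ × JB κ → ℂ) : Fin κ × JB κ → ℂ :=
  fun p => evolve κ a b c d (fun e => α (p.1, e)) p.2

/-- `|Own, 0, ε⟩ = Σ_j |ε'_j⟩ ⊗ |0, ε_j⟩`. -/
def vOwn0 (κ : ℕ) : Fin κ × JB κ → ℂ :=
  fun p => if p.2 = Sum.inl p.1 then 1 else 0

/-- `|Other, 0, ε⟩ = (κ-1)^{-1/2} Σ_j Σ_{k ≠ j} |ε'_k⟩ ⊗ |0, ε_j⟩`. -/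
def vOther0 (κ : ℕ) : Fin κ × JB κ → ℂ :=
  fun p =>
    match p.2 with
    | Sum.inl j => if p.1 ≠ j then ((Real.sqrt ((κ : ℝ) - 1) : ℂ))⁻¹ else 0
    | _ => 0

/-- `|Own, n+1, l⟩ = Σ_j |ε'_j⟩ ⊗ |h_j(n+1), l⟩`. -/
def vOwn (κ : ℕ) (n : ℕ) (l : Dir) : Fin κ × JB κ → ℂ :=
  fun p => if p.2 = Sum.inr (p.1, n, l) then 1 else 0

/-- `|Other, n+1, l⟩ = (κ-1)^{-1/2} Σ_j Σ_{k ≠ j} |ε'_k⟩ ⊗ |h_j(n+1), l⟩`. -/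
def vOther (κ : ℕ) (n : ℕ) (l : Dir) : Fin κ × JB κ → ℂ :=
  fun p =>
    match p.2 with
    | Sum.inr (j, m, l') =>
        if p.1 ≠ j ∧ m = n ∧ l' = l then ((Real.sqrt ((κ : ℝ) - 1) : ℂ))⁻¹ else 0
    | _ => 0

/-- The enlarged basis set. -/
def redBasis (κ : ℕ) : Set (Fin κ × JB κ → ℂ) :=
  insert (vOwn0 κ) (insert (vOther0 κ)
    (Set.range (fun q : ℕ × Dir => vOwn κ q.1 q.2) ∪
      Set.range (fun q : ℕ × Dir => vOther κ q.1 q.2)))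

/-!
Every vector of the reduced basis is `Σ_{k,j} W k j |ε'_k⟩ ⊗ |v_j⟩`, where `v_j` is a fixed site and
direction on the `j`-th half line, with weight matrix `W = 1` (Own) or `W = (κ-1)^{-1/2} (J - 1)`
(Other), `J` the all-ones matrix. Away from the origin `U'_J` acts on every half line by the same
coin `C` and leaves the weight untouched. At the origin the Grover coin acts on the weight by
`W ↦ W * G_κ`; since `G_κ = a_κ 1 + b_κ (J - 1)` and `(J - 1)² = (κ-2)(J - 1) + (κ-1) 1`, the plane
spanned by `1` and `J - 1` is `G_κ`-invariant, which gives the two formulas at the origin.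
-/

section Evolution

variable {κ : ℕ} {a b c d : ℂ} (α : Fin κ × JB κ → ℂ) (k r : Fin κ) (n : ℕ)

@[simp] lemma evolve'_apply_origin :
    evolve' κ a b c d α (k, .inl r) =
      a * α (k, .inr (r, 0, .up)) + b * α (k, .inr (r, 0, .down)) := rfl

@[simp] lemma evolve'_apply_up :
    evolve' κ a b c d α (k, .inr (r, n, .up)) =
      a * α (k, .inr (r, n + 1, .up)) + b * α (k, .inr (r, n + 1, .down)) := rfl

@[simp] lemma evolve'_apply_down_zero :
    evolve' κ a b c d α (k, .inr (r, 0, .down)) =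
      ∑ j, (if r = j then 2 / (κ : ℂ) - 1 else 2 / (κ : ℂ)) * α (k, .inl j) := rfl

@[simp] lemma evolve'_apply_down_succ :
    evolve' κ a b c d α (k, .inr (r, n + 1, .down)) =
      c * α (k, .inr (r, n, .up)) + d * α (k, .inr (r, n, .down)) := rfl

variable (κ a b c d) in
def evolveLinearMap : (Fin κ × JB κ → ℂ) →ₗ[ℂ] Fin κ × JB κ → ℂ where
  toFun := evolve' κ a b c d
  map_add' u v := by
    ext ⟨k, r | ⟨r, _ | n, _ | _⟩⟩ <;> simp only [evolve'_apply_origin, evolve'_apply_up,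
      evolve'_apply_down_zero, evolve'_apply_down_succ, Pi.add_apply, mul_add,
      Finset.sum_add_distrib] <;> ring
  map_smul' t u := by
    ext ⟨k, r | ⟨r, _ | n, _ | _⟩⟩ <;> simp only [evolve'_apply_origin, evolve'_apply_up,
      evolve'_apply_down_zero, evolve'_apply_down_succ, Pi.smul_apply, smul_eq_mul,
      RingHom.id_apply, Finset.mul_sum, mul_left_comm t] <;> ring

end Evolution

end QW

namespace Matrix

lemma of_one_mul_of_one {n α : Type*} [Fintype n] [NonAssocSemiring α] :
    (of 1 : Matrix n n α) * of 1 = (Fintype.card n : α) • of 1 := by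
  ext i j
  simp [mul_apply]

lemma of_one_sub_one_mul_self {n α : Type*} [Fintype n] [DecidableEq n] [CommRing α] :
    (of 1 - 1 : Matrix n n α) * (of 1 - 1) =
      ((Fintype.card n : α) - 2) • (of 1 - 1) + ((Fintype.card n : α) - 1) • 1 := by
  rw [sub_mul, mul_sub, mul_sub, of_one_mul_of_one, mul_one, one_mul, mul_one]
  module

end Matrix

namespace QW

open Matrix

def groverMatrix (κ : ℕ) : Matrix (Fin κ) (Fin κ) ℂ :=
  of fun i j => if i = j then 2 / (κ : ℂ) - 1 else 2 / (κ : ℂ)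

lemma groverMatrix_eq (κ : ℕ) :
    groverMatrix κ = (2 / (κ : ℂ) - 1) • 1 + (2 / (κ : ℂ)) • (of 1 - 1) := by
  ext i j
  by_cases h : i = j <;> simp [groverMatrix, one_apply, h]

section BranchVectors

variable {κ : ℕ} {a b c d : ℂ}

/-- `Σ_{k,j} W k j |ε'_k⟩ ⊗ |0, ε_j⟩`. -/
def originVec (W : Matrix (Fin κ) (Fin κ) ℂ) : Fin κ × JB κ → ℂ
  | (k, .inl j) => W k j
  | (_, .inr _) => 0

/-- `Σ_{k,j} W k j |ε'_k⟩ ⊗ |h_j(n+1), l⟩`. -/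
def branchVec (n : ℕ) (l : Dir) : Matrix (Fin κ) (Fin κ) ℂ →ₗ[ℂ] Fin κ × JB κ → ℂ where
  toFun W
    | (_, .inl _) => 0
    | (k, .inr (j, m, l')) => if m = n ∧ l' = l then W k j else 0
  map_add' W V := by ext ⟨k, _ | ⟨j, m, l'⟩⟩ <;> simp [ite_add_ite]
  map_smul' t W := by ext ⟨k, _ | ⟨j, m, l'⟩⟩ <;> simp

variable (W : Matrix (Fin κ) (Fin κ) ℂ) (n : ℕ)

lemma evolve'_branchVec_up_zero :
    evolve' κ a b c d (branchVec 0 .up W) = a • originVec W + c • branchVec 1 .down W := by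
  ext ⟨k, r | ⟨r, _ | m, _ | _⟩⟩ <;> simp [branchVec, originVec]

lemma evolve'_branchVec_up_succ :
    evolve' κ a b c d (branchVec (n + 1) .up W) =
      a • branchVec n .up W + c • branchVec (n + 2) .down W := by
  ext ⟨k, r | ⟨r, _ | m, _ | _⟩⟩ <;> simp [branchVec, eq_comm]

lemma evolve'_branchVec_down_zero :
    evolve' κ a b c d (branchVec 0 .down W) = b • originVec W + d • branchVec 1 .down W := by
  ext ⟨k, r | ⟨r, _ | m, _ | _⟩⟩ <;> simp [branchVec, originVec]

lemma evolve'_branchVec_down_succ :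
    evolve' κ a b c d (branchVec (n + 1) .down W) =
      b • branchVec n .up W + d • branchVec (n + 2) .down W := by
  ext ⟨k, r | ⟨r, _ | m, _ | _⟩⟩ <;> simp [branchVec, eq_comm]

lemma evolve'_originVec :
    evolve' κ a b c d (originVec W) = branchVec 0 .down (W * groverMatrix κ) := by
  ext ⟨k, r | ⟨r, _ | m, _ | _⟩⟩ <;> simp [branchVec, originVec, groverMatrix, mul_apply]
  exact Finset.sum_congr rfl fun j _ => by
    rcases eq_or_ne r j with rfl | h <;> simp [*, Ne.symm, mul_comm]

end BranchVectors

section Weights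

variable {κ : ℕ}

def otherWeight (κ : ℕ) : Matrix (Fin κ) (Fin κ) ℂ :=
  ((Real.sqrt ((κ : ℝ) - 1) : ℂ))⁻¹ • (of 1 - 1)

lemma originVec_one : originVec (1 : Matrix (Fin κ) (Fin κ) ℂ) = vOwn0 κ := by
  ext ⟨k, r | ⟨r, m, l⟩⟩ <;> simp [originVec, vOwn0, one_apply, eq_comm]

lemma originVec_otherWeight : originVec (otherWeight κ) = vOther0 κ := by
  ext ⟨k, r | ⟨r, m, l⟩⟩ <;> by_cases k = r <;>
    simp_all [originVec, vOther0, otherWeight, one_apply]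

lemma branchVec_one (n : ℕ) (l : Dir) :
    branchVec n l (1 : Matrix (Fin κ) (Fin κ) ℂ) = vOwn κ n l := by
  ext ⟨k, r | ⟨r, m, l'⟩⟩ <;> by_cases k = r <;>
    simp_all [branchVec, vOwn, one_apply, eq_comm]

lemma branchVec_otherWeight (n : ℕ) (l : Dir) :
    branchVec n l (otherWeight κ) = vOther κ n l := by
  ext ⟨k, r | ⟨r, m, l'⟩⟩ <;> by_cases k = r <;>
    simp_all [branchVec, vOther, otherWeight, one_apply]

lemma ofReal_sqrt_sub_one_mul_self (hκ : 1 ≤ κ) :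
    (Real.sqrt ((κ : ℝ) - 1) : ℂ) * (Real.sqrt ((κ : ℝ) - 1) : ℂ) = (κ : ℂ) - 1 := by
  have hκ' : (1 : ℝ) ≤ κ := by exact_mod_cast hκ
  rw [← Complex.ofReal_mul, Real.mul_self_sqrt (by linarith)]
  push_cast
  rfl

lemma ofReal_sqrt_sub_one_ne_zero (hκ : 2 ≤ κ) : (Real.sqrt ((κ : ℝ) - 1) : ℂ) ≠ 0 := by
  have hκ' : (2 : ℝ) ≤ κ := by exact_mod_cast hκ
  exact Complex.ofReal_ne_zero.mpr (Real.sqrt_pos.mpr (by linarith)).ne'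

lemma one_mul_groverMatrix (hκ : 2 ≤ κ) :
    1 * groverMatrix κ = (2 / (κ : ℂ) - 1) • 1 +
      ((Real.sqrt ((κ : ℝ) - 1) : ℂ) * (2 / (κ : ℂ))) • otherWeight κ := by
  have hs := ofReal_sqrt_sub_one_ne_zero hκ
  rw [one_mul, groverMatrix_eq, otherWeight, smul_smul, mul_right_comm, mul_inv_cancel₀ hs,
    one_mul]

lemma otherWeight_mul_groverMatrix (hκ : 2 ≤ κ) :
    otherWeight κ * groverMatrix κ =
      ((Real.sqrt ((κ : ℝ) - 1) : ℂ) * (2 / (κ : ℂ))) • 1 - (2 / (κ : ℂ) - 1) • otherWeight κ := by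
  have hs := ofReal_sqrt_sub_one_ne_zero hκ
  have hss := ofReal_sqrt_sub_one_mul_self (by omega : 1 ≤ κ)
  have hκ0 : (κ : ℂ) ≠ 0 := by exact_mod_cast (by omega : κ ≠ 0)
  rw [groverMatrix_eq, otherWeight, mul_add, mul_smul_comm, mul_smul_comm, mul_one, smul_mul_assoc,
    of_one_sub_one_mul_self, Fintype.card_fin]
  generalize (Real.sqrt ((κ : ℝ) - 1) : ℂ) = s at hs hss ⊢
  match_scalars
  · field_simp
    ring
  · field_simp
    linear_combination -2 * hss

end Weights

section HalfLine

variable {κ : ℕ} {a b c d : ℂ}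

lemma evolve'_vOwn0 (hκ : 2 ≤ κ) :
    evolve' κ a b c d (vOwn0 κ) = (2 / (κ : ℂ) - 1) • vOwn κ 0 .down +
      ((Real.sqrt ((κ : ℝ) - 1) : ℂ) * (2 / (κ : ℂ))) • vOther κ 0 .down := by
  rw [← originVec_one, evolve'_originVec, one_mul_groverMatrix hκ, map_add, map_smul, map_smul,
    branchVec_one, branchVec_otherWeight]

lemma evolve'_vOther0 (hκ : 2 ≤ κ) :
    evolve' κ a b c d (vOther0 κ) =
      ((Real.sqrt ((κ : ℝ) - 1) : ℂ) * (2 / (κ : ℂ))) • vOwn κ 0 .down -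
        (2 / (κ : ℂ) - 1) • vOther κ 0 .down := by
  rw [← originVec_otherWeight, evolve'_originVec, otherWeight_mul_groverMatrix hκ, map_sub,
    map_smul, map_smul, branchVec_one, branchVec_otherWeight]

variable (n : ℕ)

lemma evolve'_vOwn_up_zero :
    evolve' κ a b c d (vOwn κ 0 .up) = a • vOwn0 κ + c • vOwn κ 1 .down := by
  simp only [← branchVec_one, ← originVec_one, evolve'_branchVec_up_zero]

lemma evolve'_vOwn_up_succ :
    evolve' κ a b c d (vOwn κ (n + 1) .up) = a • vOwn κ n .up + c • vOwn κ (n + 2) .down := by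
  simp only [← branchVec_one, evolve'_branchVec_up_succ]

lemma evolve'_vOwn_down_zero :
    evolve' κ a b c d (vOwn κ 0 .down) = b • vOwn0 κ + d • vOwn κ 1 .down := by
  simp only [← branchVec_one, ← originVec_one, evolve'_branchVec_down_zero]

lemma evolve'_vOwn_down_succ :
    evolve' κ a b c d (vOwn κ (n + 1) .down) = b • vOwn κ n .up + d • vOwn κ (n + 2) .down := by
  simp only [← branchVec_one, evolve'_branchVec_down_succ]

lemma evolve'_vOther_up_zero :
    evolve' κ a b c d (vOther κ 0 .up) = a • vOther0 κ + c • vOther κ 1 .down := by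
  simp only [← branchVec_otherWeight, ← originVec_otherWeight, evolve'_branchVec_up_zero]

lemma evolve'_vOther_up_succ :
    evolve' κ a b c d (vOther κ (n + 1) .up) =
      a • vOther κ n .up + c • vOther κ (n + 2) .down := by
  simp only [← branchVec_otherWeight, evolve'_branchVec_up_succ]

lemma evolve'_vOther_down_zero :
    evolve' κ a b c d (vOther κ 0 .down) = b • vOther0 κ + d • vOther κ 1 .down := by
  simp only [← branchVec_otherWeight, ← originVec_otherWeight, evolve'_branchVec_down_zero]

lemma evolve'_vOther_down_succ :
    evolve' κ a b c d (vOther κ (n + 1) .down) =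
      b • vOther κ n .up + d • vOther κ (n + 2) .down := by
  simp only [← branchVec_otherWeight, evolve'_branchVec_down_succ]

lemma evolve'_mem_span_redBasis (hκ : 2 ≤ κ) {v : Fin κ × JB κ → ℂ}
    (hv : v ∈ Submodule.span ℂ (redBasis κ)) :
    evolve' κ a b c d v ∈ Submodule.span ℂ (redBasis κ) := by
  suffices h : ∀ x ∈ redBasis κ, evolveLinearMap κ a b c d x ∈ Submodule.span ℂ (redBasis κ) from
    (Submodule.map_span_le _ _ _).2 h (Submodule.mem_map_of_mem hv)
  rintro _ (rfl | rfl | ⟨⟨_ | n, _ | _⟩, rfl⟩ | ⟨⟨_ | n, _ | _⟩, rfl⟩) <;>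
    simp only [evolveLinearMap, LinearMap.coe_mk, AddHom.coe_mk, evolve'_vOwn0 hκ,
      evolve'_vOther0 hκ, evolve'_vOwn_up_zero, evolve'_vOwn_up_succ, evolve'_vOwn_down_zero,
      evolve'_vOwn_down_succ, evolve'_vOther_up_zero, evolve'_vOther_up_succ,
      evolve'_vOther_down_zero, evolve'_vOther_down_succ] <;>
    (first
      | refine add_mem (Submodule.smul_mem _ _ ?_) (Submodule.smul_mem _ _ ?_)
      | refine sub_mem (Submodule.smul_mem _ _ ?_) (Submodule.smul_mem _ _ ?_)) <;>
    exact Submodule.subset_span (by simp [redBasis])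

end HalfLine

theorem reduction_to_half_line_general (κ : ℕ) (hκ : 2 ≤ κ) (a b c d : ℂ) :
    (evolve' κ a b c d (vOwn0 κ) =
        (2 / (κ : ℂ) - 1) • vOwn κ 0 Dir.down +
          ((Real.sqrt ((κ : ℝ) - 1) : ℂ) * (2 / (κ : ℂ))) • vOther κ 0 Dir.down) ∧
    (evolve' κ a b c d (vOther0 κ) =
        ((Real.sqrt ((κ : ℝ) - 1) : ℂ) * (2 / (κ : ℂ))) • vOwn κ 0 Dir.down -
          (2 / (κ : ℂ) - 1) • vOther κ 0 Dir.down) ∧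
    (evolve' κ a b c d (vOwn κ 0 Dir.up) = a • vOwn0 κ + c • vOwn κ 1 Dir.down) ∧
    (∀ n : ℕ, evolve' κ a b c d (vOwn κ (n + 1) Dir.up) =
        a • vOwn κ n Dir.up + c • vOwn κ (n + 2) Dir.down) ∧
    (evolve' κ a b c d (vOwn κ 0 Dir.down) = b • vOwn0 κ + d • vOwn κ 1 Dir.down) ∧
    (∀ n : ℕ, evolve' κ a b c d (vOwn κ (n + 1) Dir.down) =
        b • vOwn κ n Dir.up + d • vOwn κ (n + 2) Dir.down) ∧
    (evolve' κ a b c d (vOther κ 0 Dir.up) = a • vOther0 κ + c • vOther κ 1 Dir.down) ∧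
    (∀ n : ℕ, evolve' κ a b c d (vOther κ (n + 1) Dir.up) =
        a • vOther κ n Dir.up + c • vOther κ (n + 2) Dir.down) ∧
    (evolve' κ a b c d (vOther κ 0 Dir.down) = b • vOther0 κ + d • vOther κ 1 Dir.down) ∧
    (∀ n : ℕ, evolve' κ a b c d (vOther κ (n + 1) Dir.down) =
        b • vOther κ n Dir.up + d • vOther κ (n + 2) Dir.down) ∧
    (∀ v ∈ Submodule.span ℂ (redBasis κ),
        evolve' κ a b c d v ∈ Submodule.span ℂ (redBasis κ)) :=
  ⟨evolve'_vOwn0 hκ, evolve'_vOther0 hκ, evolve'_vOwn_up_zero, evolve'_vOwn_up_succ,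
    evolve'_vOwn_down_zero, evolve'_vOwn_down_succ, evolve'_vOther_up_zero, evolve'_vOther_up_succ,
    evolve'_vOther_down_zero, evolve'_vOther_down_succ, fun _ => evolve'_mem_span_redBasis hκ⟩

/-- **Reduction to a half line.** -/
theorem reduction_to_half_line (κ : ℕ) (hκ : 2 ≤ κ) (a b c d : ℂ)
    (hU : !![a, b; c, d] ∈ Matrix.unitaryGroup (Fin 2) ℂ) (h0 : a * b * c * d ≠ 0) :
    (evolve' κ a b c d (vOwn0 κ) =
        (2 / (κ : ℂ) - 1) • vOwn κ 0 Dir.down +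
          ((Real.sqrt ((κ : ℝ) - 1) : ℂ) * (2 / (κ : ℂ))) • vOther κ 0 Dir.down) ∧
    (evolve' κ a b c d (vOther0 κ) =
        ((Real.sqrt ((κ : ℝ) - 1) : ℂ) * (2 / (κ : ℂ))) • vOwn κ 0 Dir.down -
          (2 / (κ : ℂ) - 1) • vOther κ 0 Dir.down) ∧
    (evolve' κ a b c d (vOwn κ 0 Dir.up) = a • vOwn0 κ + c • vOwn κ 1 Dir.down) ∧
    (∀ n : ℕ, evolve' κ a b c d (vOwn κ (n + 1) Dir.up) =
        a • vOwn κ n Dir.up + c • vOwn κ (n + 2) Dir.down) ∧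
    (evolve' κ a b c d (vOwn κ 0 Dir.down) = b • vOwn0 κ + d • vOwn κ 1 Dir.down) ∧
    (∀ n : ℕ, evolve' κ a b c d (vOwn κ (n + 1) Dir.down) =
        b • vOwn κ n Dir.up + d • vOwn κ (n + 2) Dir.down) ∧
    (evolve' κ a b c d (vOther κ 0 Dir.up) = a • vOther0 κ + c • vOther κ 1 Dir.down) ∧
    (∀ n : ℕ, evolve' κ a b c d (vOther κ (n + 1) Dir.up) =
        a • vOther κ n Dir.up + c • vOther κ (n + 2) Dir.down) ∧
    (evolve' κ a b c d (vOther κ 0 Dir.down) = b • vOther0 κ + d • vOther κ 1 Dir.down) ∧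
    (∀ n : ℕ, evolve' κ a b c d (vOther κ (n + 1) Dir.down) =
        b • vOther κ n Dir.up + d • vOther κ (n + 2) Dir.down) ∧
    (∀ v ∈ Submodule.span ℂ (redBasis κ),
        evolve' κ a b c d v ∈ Submodule.span ℂ (redBasis κ)) :=
  reduction_to_half_line_general κ hκ a b c d

end QW
end
end

section
/- (Unimodularity of the roots v_±(s).) Let C = [[a,b],[c,d]] ∈ U(2) with abcd ≠ 0 and Δ = ad − bc. Then for every real s, every complex root v of the quadratic equation Δv² − (a e^{−is} + ā Δ e^{is}) v + 1 = 0 satisfies |v| = 1. -/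
/-!
The polynomial `Δv² - τv + 1` with `|Δ| = 1` is self-inversive when `τ = Δ τ̄`: if `v` is a
root, so is `1 / v̄`. Comparing the equation for `v` with its conjugate gives
`(|v|² - 1)(Δv - v̄) = 0`. In the second case `|v|² + 1 = τv`, so `|v|² + 1 ≤ |τ||v| ≤ 2|v|`,
which again forces `|v| = 1`. For the quadratic of the theorem `|τ| ≤ |a| + |a| ≤ 2`, since
`a` is an entry of a unitary matrix.
-/

namespace QW

open ComplexConjugate

theorem norm_eq_one_of_selfInversive_quadratic {Δ τ v : ℂ} (hΔ : ‖Δ‖ = 1)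
    (hτ : τ = Δ * conj τ) (hτ_le : ‖τ‖ ≤ 2) (hv : Δ * v ^ 2 - τ * v + 1 = 0) : ‖v‖ = 1 := by
  have hΔΔ : conj Δ * Δ = 1 := by rw [Complex.conj_mul', hΔ]; norm_num
  have hv_conj : conj v ^ 2 - τ * conj v + Δ = 0 := by
    have h := congrArg conj hv
    simp only [map_add, map_sub, map_mul, map_pow, map_one, map_zero] at h
    linear_combination Δ * h - conj v ^ 2 * hΔΔ - conj v * hτ
  have hfac : (v * conj v - 1) * (Δ * v - conj v) = 0 := by
    linear_combination conj v * hv - v * hv_conj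
  rcases mul_eq_zero.mp hfac with hunit | hrefl
  · have hsq : ‖v‖ ^ 2 = 1 := by
      exact_mod_cast (Complex.mul_conj' v).symm.trans (sub_eq_zero.mp hunit)
    nlinarith [norm_nonneg v]
  · have hsum : ((‖v‖ ^ 2 + 1 : ℝ) : ℂ) = τ * v := by
      push_cast
      rw [← Complex.mul_conj']
      linear_combination hv - v * hrefl
    have hnorm : ‖v‖ ^ 2 + 1 = ‖τ‖ * ‖v‖ := by
      rw [← norm_mul, ← hsum, Complex.norm_real, Real.norm_of_nonneg (by positivity)]
    nlinarith [norm_nonneg v, sq_nonneg (‖v‖ - 1)]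

section Coefficient

variable (a Δ : ℂ) (s : ℝ)

theorem coeff_eq_mul_conj (hΔ : ‖Δ‖ = 1) :
    a * Complex.exp (-(s : ℂ) * Complex.I) + conj a * Δ * Complex.exp ((s : ℂ) * Complex.I) =
      Δ * conj (a * Complex.exp (-(s : ℂ) * Complex.I) +
        conj a * Δ * Complex.exp ((s : ℂ) * Complex.I)) := by
  have hΔΔ : Δ * conj Δ = 1 := by rw [Complex.mul_conj', hΔ]; norm_num
  simp only [map_add, map_mul, ← Complex.exp_conj, map_neg, Complex.conj_ofReal, Complex.conj_I,
    Complex.conj_conj, neg_mul, mul_neg, neg_neg]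
  linear_combination (-(a * Complex.exp (-((s : ℂ) * Complex.I)))) * hΔΔ

theorem norm_coeff_le_two (ha : ‖a‖ ≤ 1) (hΔ : ‖Δ‖ = 1) :
    ‖a * Complex.exp (-(s : ℂ) * Complex.I) + conj a * Δ * Complex.exp ((s : ℂ) * Complex.I)‖
      ≤ 2 := by
  have hexp : ‖Complex.exp (-(s : ℂ) * Complex.I)‖ = 1 := by
    simpa using Complex.norm_exp_ofReal_mul_I (-s)
  calc _ ≤ ‖a * Complex.exp (-(s : ℂ) * Complex.I)‖
          + ‖conj a * Δ * Complex.exp ((s : ℂ) * Complex.I)‖ := norm_add_le _ _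
    _ = ‖a‖ + ‖a‖ := by
        simp only [norm_mul, hexp, Complex.norm_exp_ofReal_mul_I, Complex.norm_conj, hΔ, mul_one]
    _ ≤ 2 := by linarith

end Coefficient

theorem roots_unimodular_general (a b c d : ℂ)
    (hU : !![a, b; c, d] ∈ Matrix.unitaryGroup (Fin 2) ℂ)
    (s : ℝ) (v : ℂ)
    (hv : (a * d - b * c) * v ^ 2 -
        (a * Complex.exp (-(s : ℂ) * Complex.I) +
          (starRingEnd ℂ) a * (a * d - b * c) * Complex.exp ((s : ℂ) * Complex.I)) * v + 1 = 0) :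
    ‖v‖ = 1 := by
  have hΔ : ‖a * d - b * c‖ = 1 := by
    simpa [Matrix.det_fin_two_of] using CStarRing.norm_of_mem_unitary (Matrix.det_of_mem_unitary hU)
  have ha : ‖a‖ ≤ 1 := by simpa using entry_norm_bound_of_unitary hU 0 0
  exact norm_eq_one_of_selfInversive_quadratic hΔ (coeff_eq_mul_conj a _ s hΔ)
    (norm_coeff_le_two a _ s ha hΔ) hv

/-- **Unimodularity of the roots `v_±(s)`.** -/
theorem roots_unimodular (a b c d : ℂ)
    (hU : !![a, b; c, d] ∈ Matrix.unitaryGroup (Fin 2) ℂ) (h0 : a * b * c * d ≠ 0)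
    (s : ℝ) (v : ℂ)
    (hv : (a * d - b * c) * v ^ 2 -
        (a * Complex.exp (-(s : ℂ) * Complex.I) +
          (starRingEnd ℂ) a * (a * d - b * c) * Complex.exp ((s : ℂ) * Complex.I)) * v + 1 = 0) :
    ‖v‖ = 1 :=
  roots_unimodular_general a b c d hU s v hv

end QW
end
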